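/- Let λ ∈ ℂ with λ_i = Im λ < 0 and f ∈ L²((-∞, a]; H). Then for almost every t ≤ a the function s ↦ e^{−iλ(t−s)} exp(i(t−s)A) f(s) is Bochner integrable on (-∞, t), and the function u(t) = ∫_{-∞}^t e^{−iλ(t−s)} exp(i(t−s)A) f(s) ds belongs to L²((-∞, a]; H) with ‖u‖_{L²((-∞,a];H)} ≤ (1/|λ_i|) ‖f‖_{L²((-∞,a];H)}. -/

import Mathlib

open MeasureTheory Set Complex
open scoped InnerProductSpace

/-- The operator exponential `exp(iτA)` for a bounded operator `A` and `τ ∈ ℝ`. -/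
noncomputable def expIA {H : Type*} [NormedAddCommGroup H] [InnerProductSpace ℂ H]
    [CompleteSpace H] (A : H →L[ℂ] H) (τ : ℝ) : H →L[ℂ] H :=
  NormedSpace.exp ((Complex.I * (τ : ℂ)) • A)

/-!
Since `exp(iτA)` is unitary, the integrand has norm `e^{Im λ (t - s)} ‖f s‖`, so `‖u‖` is dominated
by the convolution of `‖f‖` with the causal kernel `τ ↦ 1_{τ > 0} e^{Im λ τ}`, whose `L¹` norm is
`1 / |Im λ|`. Schur's test bounds such a convolution on `L²` by the `L¹` norm of the kernel:
Cauchy–Schwarz against the kernel gives `(∫ K φ)² ≤ (∫ K) (∫ K φ²)`, and Tonelli integrates the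
last factor in `t` first. Finiteness of the resulting double integral also makes the integrand
integrable for almost every `t`.
-/

open scoped ENNReal

section Schur

variable {α β : Type*} [MeasurableSpace α] [MeasurableSpace β] {μ : Measure α} {ν : Measure β}

theorem lintegral_mul_sq_le {f g : β → ℝ≥0∞} (hf : AEMeasurable f ν) (hg : AEMeasurable g ν) :
    (∫⁻ s, f s * g s ∂ν) ^ 2 ≤ (∫⁻ s, f s ∂ν) * ∫⁻ s, f s * g s ^ 2 ∂ν := by
  have hfg : ∀ s, f s ^ (2⁻¹ : ℝ) * (f s * g s ^ 2) ^ (2⁻¹ : ℝ) = f s * g s := fun s => by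
    rw [← ENNReal.mul_rpow_of_nonneg _ _ (by norm_num), ← mul_assoc, ← sq, ← mul_pow]
    exact_mod_cast ENNReal.pow_rpow_inv_natCast two_ne_zero (f s * g s)
  have h := ENNReal.lintegral_mul_norm_pow_le hf (hf.mul (hg.pow_const 2)) (p := 2⁻¹) (q := 2⁻¹)
    (by norm_num) (by norm_num) (by norm_num)
  simp only [Pi.mul_apply, hfg] at h
  calc (∫⁻ s, f s * g s ∂ν) ^ 2
      ≤ ((∫⁻ s, f s ∂ν) ^ (2⁻¹ : ℝ) * (∫⁻ s, f s * g s ^ 2 ∂ν) ^ (2⁻¹ : ℝ)) ^ 2 := by gcongr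
    _ = (∫⁻ s, f s ∂ν) * ∫⁻ s, f s * g s ^ 2 ∂ν := by
      rw [mul_pow]
      exact_mod_cast congrArg₂ (· * ·) (ENNReal.rpow_inv_natCast_pow two_ne_zero _)
        (ENNReal.rpow_inv_natCast_pow two_ne_zero _)

theorem lintegral_sq_lintegral_mul_le [SFinite μ] [SFinite ν] {K : α → β → ℝ≥0∞}
    (hK : Measurable (Function.uncurry K)) {φ : β → ℝ≥0∞} (hφ : AEMeasurable φ ν) {C : ℝ≥0∞}
    (hrow : ∀ t, ∫⁻ s, K t s ∂ν ≤ C) (hcol : ∀ s, ∫⁻ t, K t s ∂μ ≤ C) :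
    ∫⁻ t, (∫⁻ s, K t s * φ s ∂ν) ^ 2 ∂μ ≤ C ^ 2 * ∫⁻ s, φ s ^ 2 ∂ν := by
  have hKφ : AEMeasurable (Function.uncurry fun t s => K t s * φ s ^ 2) (μ.prod ν) :=
    hK.aemeasurable.mul (hφ.pow_const 2).comp_snd
  calc ∫⁻ t, (∫⁻ s, K t s * φ s ∂ν) ^ 2 ∂μ
      ≤ ∫⁻ t, C * ∫⁻ s, K t s * φ s ^ 2 ∂ν ∂μ := lintegral_mono fun t =>
        (lintegral_mul_sq_le hK.of_uncurry_left.aemeasurable hφ).trans (by gcongr; exact hrow t)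
    _ = C * ∫⁻ s, (∫⁻ t, K t s ∂μ) * φ s ^ 2 ∂ν := by
      rw [lintegral_const_mul'' _ hKφ.lintegral_prod_right, lintegral_lintegral_swap hKφ]
      simp_rw [lintegral_mul_const _ hK.of_uncurry_right]
    _ ≤ C * ∫⁻ s, C * φ s ^ 2 ∂ν := by gcongr with s; exact hcol s
    _ = C ^ 2 * ∫⁻ s, φ s ^ 2 ∂ν := by
      rw [lintegral_const_mul'' _ (hφ.pow_const 2), ← mul_assoc, sq]

theorem ae_lintegral_mul_lt_top [SFinite μ] [SFinite ν] {K : α → β → ℝ≥0∞}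
    (hK : Measurable (Function.uncurry K)) {φ : β → ℝ≥0∞} (hφ : AEMeasurable φ ν) {C : ℝ≥0∞}
    (hrow : ∀ t, ∫⁻ s, K t s ∂ν ≤ C) (hcol : ∀ s, ∫⁻ t, K t s ∂μ ≤ C) (hC : C ≠ ∞)
    (hφ2 : ∫⁻ s, φ s ^ 2 ∂ν ≠ ∞) :
    ∀ᵐ t ∂μ, ∫⁻ s, K t s * φ s ∂ν < ∞ := by
  have hmeas : AEMeasurable (fun t => ∫⁻ s, K t s * φ s ∂ν) μ :=
    (hK.aemeasurable.mul hφ.comp_snd).lintegral_prod_right'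
  have hfin : ∫⁻ t, (∫⁻ s, K t s * φ s ∂ν) ^ 2 ∂μ ≠ ∞ :=
    ((lintegral_sq_lintegral_mul_le hK hφ hrow hcol).trans_lt
      (ENNReal.mul_lt_top (ENNReal.pow_lt_top hC.lt_top) hφ2.lt_top)).ne
  filter_upwards [ae_lt_top' (hmeas.pow_const 2) hfin] with t ht
  exact (ENNReal.pow_lt_top_iff.1 ht).resolve_right two_ne_zero

end Schur

theorem lintegral_enorm_indicator {α ε : Type*} [MeasurableSpace α] {μ : Measure α}
    [TopologicalSpace ε] [ESeminormedAddMonoid ε] (g : α → ε) {S : Set α}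
    (hS : MeasurableSet S) :
    ∫⁻ x, ‖S.indicator g x‖ₑ ∂μ = ∫⁻ x in S, ‖g x‖ₑ ∂μ := by
  rw [lintegral_congr fun x => enorm_indicator_eq_indicator_enorm g x, lintegral_indicator hS]

theorem sq_eLpNorm_two {α ε : Type*} [MeasurableSpace α] {μ : Measure α}
    [TopologicalSpace ε] [ESeminormedAddMonoid ε] (g : α → ε) :
    eLpNorm g 2 μ ^ 2 = ∫⁻ x, ‖g x‖ₑ ^ 2 ∂μ := by
  simpa [ENNReal.rpow_two] using
    eLpNorm_nnreal_pow_eq_lintegral (f := g) (μ := μ) (p := 2) two_ne_zero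

section Volterra

variable {𝕜 E F : Type*} [NontriviallyNormedField 𝕜] [NormedAddCommGroup E] [NormedSpace 𝕜 E]
  [NormedAddCommGroup F] [NormedSpace 𝕜 F] {R : ℝ → E →L[𝕜] F} {f : ℝ → E} {a t : ℝ}

theorem indicator_Iio_comp_sub (R : ℝ → E →L[𝕜] F) (f : ℝ → E) (t : ℝ) :
    (Iio t).indicator (fun s => R (t - s) (f s)) =
      fun s => (Ioi 0).indicator R (t - s) (f s) := by
  ext s
  by_cases h : s < t <;> simp [h, sub_pos]

theorem restrict_Iic_restrict_Iio (ht : t ≤ a) :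
    (volume.restrict (Iic a)).restrict (Iio t) = volume.restrict (Iio t) :=
  Measure.restrict_restrict_of_subset fun _ hs => (le_of_lt hs).trans ht

theorem integrableOn_Iio_iff_integrable_indicator_Ioi (ht : t ≤ a) :
    IntegrableOn (fun s => R (t - s) (f s)) (Iio t) ↔
      Integrable (fun s => (Ioi 0).indicator R (t - s) (f s)) (volume.restrict (Iic a)) := by
  rw [IntegrableOn, ← restrict_Iic_restrict_Iio ht, ← IntegrableOn,
    ← integrable_indicator_iff measurableSet_Iio, indicator_Iio_comp_sub]

theorem setIntegral_Iio_eq_integral_indicator_Ioi [NormedSpace ℝ F] (ht : t ≤ a) :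
    ∫ s in Iio t, R (t - s) (f s) = ∫ s in Iic a, (Ioi 0).indicator R (t - s) (f s) := by
  rw [← restrict_Iic_restrict_Iio ht, ← integral_indicator measurableSet_Iio,
    indicator_Iio_comp_sub]

theorem measurable_enorm_indicator_Ioi_sub (hR : StronglyMeasurable R) :
    Measurable (Function.uncurry fun t s => ‖(Ioi 0).indicator R (t - s)‖ₑ) :=
  ((hR.indicator measurableSet_Ioi).enorm).comp measurable_sub

theorem lintegral_enorm_indicator_Ioi_sub_left_le {μ : Measure ℝ} (hμ : μ ≤ volume) (t : ℝ) :
    ∫⁻ s, ‖(Ioi 0).indicator R (t - s)‖ₑ ∂μ ≤ ∫⁻ τ in Ioi 0, ‖R τ‖ₑ := by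
  refine (lintegral_mono' hμ le_rfl).trans_eq ?_
  rw [lintegral_sub_left_eq_self (fun τ => ‖(Ioi 0).indicator R τ‖ₑ) t]
  exact lintegral_enorm_indicator R measurableSet_Ioi

theorem lintegral_enorm_indicator_Ioi_sub_right_le {μ : Measure ℝ} (hμ : μ ≤ volume) (s : ℝ) :
    ∫⁻ t, ‖(Ioi 0).indicator R (t - s)‖ₑ ∂μ ≤ ∫⁻ τ in Ioi 0, ‖R τ‖ₑ := by
  refine (lintegral_mono' hμ le_rfl).trans_eq ?_
  rw [lintegral_sub_right_eq_self (fun τ => ‖(Ioi 0).indicator R τ‖ₑ) s]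
  exact lintegral_enorm_indicator R measurableSet_Ioi

theorem enorm_setIntegral_Iio_le [NormedSpace ℝ F] (ht : t ≤ a) :
    ‖∫ s in Iio t, R (t - s) (f s)‖ₑ ≤
      ∫⁻ s in Iic a, ‖(Ioi 0).indicator R (t - s)‖ₑ * ‖f s‖ₑ := by
  rw [setIntegral_Iio_eq_integral_indicator_Ioi ht]
  exact (enorm_integral_le_lintegral_enorm _).trans
    (lintegral_mono fun s => ContinuousLinearMap.le_opENorm _ _)

theorem eLpNorm_volterra_le [NormedSpace ℝ F] (hR : StronglyMeasurable R)
    (hf : AEStronglyMeasurable f (volume.restrict (Iic a))) :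
    eLpNorm (fun t => ∫ s in Iio t, R (t - s) (f s)) 2 (volume.restrict (Iic a)) ≤
      (∫⁻ τ in Ioi 0, ‖R τ‖ₑ) * eLpNorm f 2 (volume.restrict (Iic a)) := by
  rw [← ENNReal.pow_le_pow_left_iff two_ne_zero, mul_pow, sq_eLpNorm_two, sq_eLpNorm_two]
  calc ∫⁻ t in Iic a, ‖∫ s in Iio t, R (t - s) (f s)‖ₑ ^ 2
      ≤ ∫⁻ t in Iic a, (∫⁻ s in Iic a, ‖(Ioi 0).indicator R (t - s)‖ₑ * ‖f s‖ₑ) ^ 2 := by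
        refine setLIntegral_mono_ae' measurableSet_Iic (.of_forall fun t ht => ?_)
        gcongr
        exact enorm_setIntegral_Iio_le ht
    _ ≤ _ := lintegral_sq_lintegral_mul_le (measurable_enorm_indicator_Ioi_sub hR) hf.enorm
        (lintegral_enorm_indicator_Ioi_sub_left_le Measure.restrict_le_self)
        (lintegral_enorm_indicator_Ioi_sub_right_le Measure.restrict_le_self)

theorem aestronglyMeasurable_volterra [NormedSpace ℝ F] (hR : StronglyMeasurable R)
    (hf : AEStronglyMeasurable f (volume.restrict (Iic a))) :
    AEStronglyMeasurable (fun t => ∫ s in Iio t, R (t - s) (f s)) (volume.restrict (Iic a)) := by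
  have hG : AEStronglyMeasurable (fun p : ℝ × ℝ => (Ioi 0).indicator R (p.1 - p.2) (f p.2))
      ((volume.restrict (Iic a)).prod (volume.restrict (Iic a))) :=
    (ContinuousLinearMap.id 𝕜 (E →L[𝕜] F)).aestronglyMeasurable_comp₂
      ((hR.indicator measurableSet_Ioi).comp_measurable measurable_sub).aestronglyMeasurable
      hf.comp_snd
  refine hG.integral_prod_right'.congr ?_
  filter_upwards [ae_restrict_mem measurableSet_Iic] with t ht
  exact (setIntegral_Iio_eq_integral_indicator_Ioi ht).symm

theorem ae_integrableOn_Iio_volterra (hR : StronglyMeasurable R)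
    (hRint : ∫⁻ τ in Ioi 0, ‖R τ‖ₑ ≠ ∞) (hf : MemLp f 2 (volume.restrict (Iic a))) :
    ∀ᵐ t ∂(volume.restrict (Iic a)), IntegrableOn (fun s => R (t - s) (f s)) (Iio t) := by
  have hf2 : ∫⁻ s in Iic a, ‖f s‖ₑ ^ 2 ≠ ∞ := by
    rw [← sq_eLpNorm_two]
    exact ENNReal.pow_ne_top hf.2.ne
  filter_upwards [ae_restrict_mem measurableSet_Iic,
    ae_lintegral_mul_lt_top (measurable_enorm_indicator_Ioi_sub hR) hf.1.enorm
      (lintegral_enorm_indicator_Ioi_sub_left_le Measure.restrict_le_self)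
      (lintegral_enorm_indicator_Ioi_sub_right_le Measure.restrict_le_self) hRint hf2]
    with t ht hfin
  rw [integrableOn_Iio_iff_integrable_indicator_Ioi ht]
  refine ⟨(ContinuousLinearMap.id 𝕜 (E →L[𝕜] F)).aestronglyMeasurable_comp₂
    ((hR.indicator measurableSet_Ioi).comp_measurable
      (measurable_const.sub measurable_id)).aestronglyMeasurable hf.1, ?_⟩
  exact (lintegral_mono fun s => ContinuousLinearMap.le_opENorm _ _).trans_lt hfin

theorem memLp_volterra [NormedSpace ℝ F] (hR : StronglyMeasurable R)
    (hRint : ∫⁻ τ in Ioi 0, ‖R τ‖ₑ ≠ ∞) (hf : MemLp f 2 (volume.restrict (Iic a))) :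
    MemLp (fun t => ∫ s in Iio t, R (t - s) (f s)) 2 (volume.restrict (Iic a)) :=
  ⟨aestronglyMeasurable_volterra hR hf.1,
    (eLpNorm_volterra_le hR hf.1).trans_lt (ENNReal.mul_lt_top hRint.lt_top hf.2)⟩

end Volterra

section DampedExp

variable {H : Type*} [NormedAddCommGroup H] [InnerProductSpace ℂ H] [CompleteSpace H]

theorem expIA_mem_unitary {A : H →L[ℂ] H} (hA : IsSelfAdjoint A) (τ : ℝ) :
    expIA A τ ∈ unitary (H →L[ℂ] H) := by
  have hτA : IsSelfAdjoint ((τ : ℂ) • A) := IsSelfAdjoint.smul (Complex.conj_ofReal τ) hA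
  rw [expIA, mul_smul]
  -- the exponential lemmas are stated for `ℚ`-algebras, a structure instance search does not find
  let +nondep : NormedAlgebra ℚ (H →L[ℂ] H) := NormedAlgebra.restrictScalars ℚ ℂ _
  exact NormedSpace.exp_mem_unitary_of_mem_skewAdjoint (hτA.smul_mem_skewAdjoint Complex.conj_I)

theorem norm_expIA_le_one {A : H →L[ℂ] H} (hA : IsSelfAdjoint A) (τ : ℝ) : ‖expIA A τ‖ ≤ 1 :=
  ContinuousLinearMap.opNorm_le_bound _ zero_le_one fun x => by
    rw [ContinuousLinearMap.norm_map_of_mem_unitary (expIA_mem_unitary hA τ), one_mul]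

theorem continuous_expIA (A : H →L[ℂ] H) : Continuous (expIA A) := by
  let +nondep : NormedAlgebra ℚ (H →L[ℂ] H) := NormedAlgebra.restrictScalars ℚ ℂ _
  exact NormedSpace.exp_continuous.comp
    ((continuous_const.mul Complex.continuous_ofReal).smul continuous_const)

noncomputable def dampedExpIA (A : H →L[ℂ] H) (lam : ℂ) (τ : ℝ) : H →L[ℂ] H :=
  Complex.exp (-Complex.I * lam * τ) • expIA A τ

theorem continuous_dampedExpIA (A : H →L[ℂ] H) (lam : ℂ) : Continuous (dampedExpIA A lam) :=
  (Complex.continuous_exp.comp (continuous_const.mul Complex.continuous_ofReal)).smul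
    (continuous_expIA A)

theorem norm_dampedExpIA_le {A : H →L[ℂ] H} (hA : IsSelfAdjoint A) (lam : ℂ) (τ : ℝ) :
    ‖dampedExpIA A lam τ‖ ≤ Real.exp (lam.im * τ) := by
  have hre : (-Complex.I * lam * τ).re = lam.im * τ := by simp [Complex.mul_re]
  rw [dampedExpIA, norm_smul, Complex.norm_exp, hre]
  exact mul_le_of_le_one_right (Real.exp_pos _).le (norm_expIA_le_one hA τ)

theorem lintegral_Ioi_enorm_dampedExpIA_le {A : H →L[ℂ] H} (hA : IsSelfAdjoint A) {lam : ℂ}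
    (hlam : lam.im < 0) :
    ∫⁻ τ in Ioi 0, ‖dampedExpIA A lam τ‖ₑ ≤ ENNReal.ofReal (1 / |lam.im|) := by
  calc ∫⁻ τ in Ioi 0, ‖dampedExpIA A lam τ‖ₑ
      ≤ ∫⁻ τ in Ioi 0, ENNReal.ofReal (Real.exp (lam.im * τ)) := lintegral_mono fun τ => by
        rw [← ofReal_norm]
        exact ENNReal.ofReal_le_ofReal (norm_dampedExpIA_le hA lam τ)
    _ = ENNReal.ofReal (1 / |lam.im|) := by
      rw [← ofReal_integral_eq_lintegral_ofReal (integrableOn_exp_mul_Ioi hlam 0)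
        (.of_forall fun τ => (Real.exp_pos _).le), integral_exp_mul_Ioi hlam 0, abs_of_neg hlam]
      simp [neg_div, div_neg]

end DampedExp

/-- For `Im λ < 0` and `f ∈ L²((-∞, a]; H)`, for a.e. `t ≤ a` the integrand
`s ↦ e^{−iλ(t−s)} exp(i(t−s)A) f(s)` is Bochner integrable on `(-∞, t)`, and
`u(t) = ∫_{-∞}^t e^{−iλ(t−s)} exp(i(t−s)A) f(s) ds` lies in `L²((-∞, a]; H)` with
`‖u‖ ≤ (1/|Im λ|) ‖f‖`. -/
theorem volterra_bound_left_halfline_lower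
    {H : Type*} [NormedAddCommGroup H] [InnerProductSpace ℂ H] [CompleteSpace H]
    (A : H →L[ℂ] H) (hA : IsSelfAdjoint A) (a : ℝ) (lam : ℂ) (hlam : lam.im < 0)
    (f : ℝ → H) (hf : MemLp f 2 (volume.restrict (Set.Iic a)))
    (u : ℝ → H)
    (hu : u = fun t : ℝ => ∫ s in Set.Iio t,
      Complex.exp (-Complex.I * lam * ((t : ℂ) - (s : ℂ))) • (expIA A (t - s)) (f s)) :
    (∀ᵐ (t : ℝ) ∂(volume.restrict (Set.Iic a)),
      IntegrableOn (fun s : ℝ =>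
        Complex.exp (-Complex.I * lam * ((t : ℂ) - (s : ℂ))) • (expIA A (t - s)) (f s))
        (Set.Iio t) volume)
    ∧ MemLp u 2 (volume.restrict (Set.Iic a))
    ∧ eLpNorm u 2 (volume.restrict (Set.Iic a))
        ≤ ENNReal.ofReal (1 / |lam.im|) * eLpNorm f 2 (volume.restrict (Set.Iic a)) := by
  have hintegrand : ∀ t s : ℝ, Complex.exp (-Complex.I * lam * ((t : ℂ) - (s : ℂ))) •
      (expIA A (t - s)) (f s) = dampedExpIA A lam (t - s) (f s) := fun t s => by
    simp [dampedExpIA]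
  simp_rw [hintegrand] at hu ⊢
  subst hu
  have hR := (continuous_dampedExpIA A lam).stronglyMeasurable
  have hC := lintegral_Ioi_enorm_dampedExpIA_le hA hlam
  have hCfin := (hC.trans_lt ENNReal.ofReal_lt_top).ne
  exact ⟨ae_integrableOn_Iio_volterra hR hCfin hf, memLp_volterra hR hCfin hf,
    (eLpNorm_volterra_le hR hf.1).trans (by gcongr)⟩
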